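/- Lower bound for the minimal eigenvalue of the tilted power: let σ be positive definite with smallest eigenvalue λ_min, let β > 1, δ ≥ 0 with δ < λ_min, and let ρ be Hermitian with −δ·I ≤ ρ − σ ≤ δ·I. Then σ^{(1−β)/(2β)} ρ σ^{(1−β)/(2β)} ≥ λ_min^{1/β}·(1 − δ/λ_min)·I > 0; consequently the smallest eigenvalue of (σ^{(1−β)/(2β)} ρ σ^{(1−β)/(2β)})^β is at least λ_min·(1 − δ/λ_min)^β. -/

import Mathlib

/-!
Put `S = σ ^ c` with `c = (1 - β) / (2β)`, so that `2c + 1 = 1/β`. Conjugating `ρ ≥ σ - δ` by the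
self-adjoint `S` gives `S ρ S ≥ S (σ - δ) S = f(σ)` with `f(x) = x ^ (1/β) * (1 - δ / x)`. On
`[δ, ∞)` the function `f` is a product of two nonnegative increasing factors, so on the spectrum of
`σ`, which lies in `[λ_min, ∞)`, it is at least `a = f(λ_min)`, and `a > 0` because `δ < λ_min`.
Hence the spectrum of `S ρ S` lies in `[a, ∞)`, and since `x ↦ x ^ β` is increasing,
`(S ρ S) ^ β ≥ a ^ β = λ_min (1 - δ/λ_min) ^ β`.
-/

open Matrix
open scoped ComplexOrder

/-- Real matrix power via continuous functional calculus. -/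
noncomputable def mpow {n : ℕ} (A : Matrix (Fin n) (Fin n) ℂ) (s : ℝ) :
    Matrix (Fin n) (Fin n) ℂ :=
  cfc (fun x : ℝ => x ^ s) A

open scoped MatrixOrder

theorem Real.rpow_mul_one_sub_div_le_rpow_mul_one_sub_div {p δ m x : ℝ} (hp : 0 ≤ p)
    (hδ : 0 ≤ δ) (hm : 0 < m) (hδm : δ ≤ m) (hmx : m ≤ x) :
    m ^ p * (1 - δ / m) ≤ x ^ p * (1 - δ / x) := by
  have hx : 0 < x := hm.trans_le hmx
  have h1 : 0 ≤ 1 - δ / m := sub_nonneg.2 ((div_le_one hm).2 hδm)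
  gcongr

section CFC

variable {A : Type*} [TopologicalSpace A] [Ring A] [StarRing A] [PartialOrder A]
  [StarOrderedRing A] [Algebra ℝ A] [ContinuousFunctionalCalculus ℝ A IsSelfAdjoint]

theorem algebraMap_le_cfc_rpow_conjugate {σ ρ : A} {m δ c : ℝ} (hσ : IsSelfAdjoint σ)
    (hm : 0 < m) (hσm : ∀ x ∈ spectrum ℝ σ, m ≤ x) (hδ : 0 ≤ δ) (hδm : δ ≤ m)
    (hc : 0 ≤ 2 * c + 1) (hρ : σ - algebraMap ℝ A δ ≤ ρ) :
    algebraMap ℝ A (m ^ (2 * c + 1) * (1 - δ / m)) ≤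
      cfc (fun x : ℝ => x ^ c) σ * ρ * cfc (fun x : ℝ => x ^ c) σ := by
  have hpos : ∀ x ∈ spectrum ℝ σ, 0 < x := fun x hx => hm.trans_le (hσm x hx)
  have hcont : ContinuousOn (fun x : ℝ => x ^ c) (spectrum ℝ σ) :=
    continuousOn_id.rpow_const fun x hx => Or.inl (hpos x hx).ne'
  set S := cfc (fun x : ℝ => x ^ c) σ
  have hconj : S * (σ - algebraMap ℝ A δ) * S = cfc (fun x => x ^ c * (x - δ) * x ^ c) σ := by
    rw [cfc_mul _ _ σ, cfc_mul _ _ σ, cfc_sub _ _ σ, cfc_id' ℝ σ, cfc_const δ σ]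
  calc algebraMap ℝ A (m ^ (2 * c + 1) * (1 - δ / m))
      ≤ S * (σ - algebraMap ℝ A δ) * S := by
        rw [hconj]
        refine algebraMap_le_cfc _ _ σ fun x hx => ?_
        have hx0 := hpos x hx
        calc m ^ (2 * c + 1) * (1 - δ / m) ≤ x ^ (2 * c + 1) * (1 - δ / x) :=
              Real.rpow_mul_one_sub_div_le_rpow_mul_one_sub_div hc hδ hm hδm (hσm x hx)
          _ = x ^ c * (x - δ) * x ^ c := by
              rw [two_mul, Real.rpow_add hx0, Real.rpow_add hx0, Real.rpow_one]
              field_simp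
    _ ≤ S * ρ * S := IsSelfAdjoint.conjugate_le_conjugate hρ (cfc_predicate _ σ)

theorem algebraMap_rpow_le_cfc_rpow [StarModule ℝ A] [NonnegSpectrumClass ℝ A] {a : A}
    {r β : ℝ} (hr : 0 ≤ r) (hβ : 0 ≤ β) (ha : algebraMap ℝ A r ≤ a) :
    algebraMap ℝ A (r ^ β) ≤ cfc (fun x : ℝ => x ^ β) a := by
  have hsa : IsSelfAdjoint a := by
    simpa using (IsSelfAdjoint.of_nonneg (sub_nonneg.2 ha)).add (.algebraMap A (.all r))
  exact algebraMap_le_cfc _ _ a fun x hx =>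
    Real.rpow_le_rpow hr ((algebraMap_le_iff_le_spectrum hsa).1 ha x hx) hβ

end CFC

namespace Matrix

variable {n 𝕜 : Type*} [Fintype n] [DecidableEq n] [RCLike 𝕜]

theorem algebraMap_le_iff_posSemidef_sub {A : Matrix n n 𝕜} {r : ℝ} :
    algebraMap ℝ (Matrix n n 𝕜) r ≤ A ↔ (A - (r : 𝕜) • 1).PosSemidef := by
  rw [le_iff, Algebra.algebraMap_eq_smul_one,
    RCLike.real_smul_eq_coe_smul (K := 𝕜) r (1 : Matrix n n 𝕜)]

theorem posDef_of_algebraMap_le {A : Matrix n n 𝕜} {r : ℝ} (hr : 0 < r)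
    (h : algebraMap ℝ (Matrix n n 𝕜) r ≤ A) : A.PosDef := by
  simpa using PosDef.posSemidef_add (algebraMap_le_iff_posSemidef_sub.1 h)
    (PosDef.one.smul (RCLike.ofReal_pos (K := 𝕜) |>.2 hr))

end Matrix

theorem tilted_lower_bound_general {n : ℕ}
    (ρ σ : Matrix (Fin n) (Fin n) ℂ)
    (hσ : σ.PosDef)
    (lmin : ℝ) (hlmin : 0 < lmin)
    (hlmin_le : ∀ i, lmin ≤ hσ.1.eigenvalues i)
    (β : ℝ) (hβ : 1 < β) (δ : ℝ) (hδ0 : 0 ≤ δ) (hδ : δ < lmin)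
    (hlo : ((ρ - σ) + (δ : ℂ) • (1 : Matrix (Fin n) (Fin n) ℂ)).PosSemidef) :
    (mpow σ ((1 - β)/(2*β)) * ρ * mpow σ ((1 - β)/(2*β))
        - ((lmin ^ ((1:ℝ)/β) * (1 - δ/lmin) : ℝ) : ℂ) •
            (1 : Matrix (Fin n) (Fin n) ℂ)).PosSemidef ∧
      (mpow σ ((1 - β)/(2*β)) * ρ * mpow σ ((1 - β)/(2*β))).PosDef ∧
      (mpow (mpow σ ((1 - β)/(2*β)) * ρ * mpow σ ((1 - β)/(2*β))) β
          - ((lmin * (1 - δ/lmin) ^ β : ℝ) : ℂ) •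
              (1 : Matrix (Fin n) (Fin n) ℂ)).PosSemidef := by
  have hβ0 : 0 < β := zero_lt_one.trans hβ
  have hexp : 2 * ((1 - β) / (2 * β)) + 1 = 1 / β := by field_simp; ring
  have hspec : ∀ x ∈ spectrum ℝ σ, lmin ≤ x := by
    rw [hσ.1.spectrum_real_eq_range_eigenvalues]
    rintro _ ⟨i, rfl⟩
    exact hlmin_le i
  have hρσ : σ - algebraMap ℝ _ δ ≤ ρ := by
    rw [le_iff, Algebra.algebraMap_eq_smul_one, ← Complex.coe_smul, sub_sub_eq_add_sub,
      add_sub_right_comm]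
    exact hlo
  have hlow := algebraMap_le_cfc_rpow_conjugate hσ.1 hlmin hspec hδ0 hδ.le
    (by rw [hexp]; positivity) hρσ
  rw [hexp] at hlow
  have hgap : 0 < 1 - δ / lmin := sub_pos.2 ((div_lt_one hlmin).2 hδ)
  have ha : 0 < lmin ^ (1 / β) * (1 - δ / lmin) := by positivity
  have hpow : (lmin ^ (1 / β) * (1 - δ / lmin)) ^ β = lmin * (1 - δ / lmin) ^ β := by
    rw [Real.mul_rpow (by positivity) hgap.le, one_div, Real.rpow_inv_rpow hlmin.le hβ0.ne']
  refine ⟨algebraMap_le_iff_posSemidef_sub.1 hlow, posDef_of_algebraMap_le ha hlow, ?_⟩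
  rw [← hpow]
  exact algebraMap_le_iff_posSemidef_sub.1 (algebraMap_rpow_le_cfc_rpow ha.le hβ0.le hlow)

/-- Lower bound for the minimal eigenvalue of the tilted power: if `σ` has smallest
eigenvalue `lmin`, `β > 1`, `0 ≤ δ < lmin`, and `-δ·I ≤ ρ - σ ≤ δ·I`, then
`σ^{(1-β)/(2β)} ρ σ^{(1-β)/(2β)} ≥ lmin^{1/β}(1 - δ/lmin)·I > 0`, and the smallest
eigenvalue of its `β`-th power is at least `lmin (1 - δ/lmin)^β`. -/
theorem tilted_lower_bound {n : ℕ}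
    (ρ σ : Matrix (Fin n) (Fin n) ℂ)
    (hσ : σ.PosDef) (hρ : ρ.IsHermitian)
    (lmin : ℝ) (hlmin : 0 < lmin)
    (hlmin_le : ∀ i, lmin ≤ hσ.1.eigenvalues i)
    (hlmin_mem : ∃ i, hσ.1.eigenvalues i = lmin)
    (β : ℝ) (hβ : 1 < β) (δ : ℝ) (hδ0 : 0 ≤ δ) (hδ : δ < lmin)
    (hup : ((δ : ℂ) • (1 : Matrix (Fin n) (Fin n) ℂ) - (ρ - σ)).PosSemidef)
    (hlo : ((ρ - σ) + (δ : ℂ) • (1 : Matrix (Fin n) (Fin n) ℂ)).PosSemidef) :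
    (mpow σ ((1 - β)/(2*β)) * ρ * mpow σ ((1 - β)/(2*β))
        - ((lmin ^ ((1:ℝ)/β) * (1 - δ/lmin) : ℝ) : ℂ) •
            (1 : Matrix (Fin n) (Fin n) ℂ)).PosSemidef ∧
      (mpow σ ((1 - β)/(2*β)) * ρ * mpow σ ((1 - β)/(2*β))).PosDef ∧
      (mpow (mpow σ ((1 - β)/(2*β)) * ρ * mpow σ ((1 - β)/(2*β))) β
          - ((lmin * (1 - δ/lmin) ^ β : ℝ) : ℂ) •
              (1 : Matrix (Fin n) (Fin n) ℂ)).PosSemidef :=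
  tilted_lower_bound_general ρ σ hσ lmin hlmin hlmin_le β hβ δ hδ0 hδ hlo
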